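/- For all real numbers c > 0 and d > 0, the improper integral ∫₀^∞ w^(−1/2) exp(−c·w) exp(−d/w) dw equals √(π/c) · exp(−2√(c·d)). -/

import Mathlib

/-!
Substituting `w = u²` turns the integral into `2 ∫₀^∞ exp (-c u² - d / u²) du`, and completing
the square gives `c u² + d / u² = (√c u - √d / u)² + 2 √(c d)`. It remains to see that
`∫₀^∞ exp (-(a u - b / u)²) du = √π / (2 a)` (Cauchy–Schlömilch): the substitution `t = a u - b / u`
gives `∫₀^∞ (a + b / u²) F (a u - b / u) du = ∫ F`, while the inversion `u ↦ b / (a u)` shows that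
for even `F` the `b / u²` part contributes as much as the `a` part.
-/

open MeasureTheory Real Set

section CauchySchlomilch

variable {E : Type*} [NormedAddCommGroup E] [NormedSpace ℝ E] {a b : ℝ}

theorem strictMonoOn_mul_sub_div (ha : 0 ≤ a) (hb : 0 < b) :
    StrictMonoOn (fun u : ℝ => a * u - b / u) (Ioi 0) := fun x hx y _ hxy => by
  have : b / y < b / x := div_lt_div_of_pos_left hb hx hxy
  have : a * x ≤ a * y := mul_le_mul_of_nonneg_left hxy.le ha
  dsimp only
  linarith

theorem image_mul_sub_div_Ioi (ha : 0 < a) (hb : 0 < b) :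
    (fun u : ℝ => a * u - b / u) '' Ioi 0 = univ := by
  refine eq_univ_of_forall fun t => ?_
  -- the positive root of `a u² - t u - b`
  set s := √(t ^ 2 + 4 * a * b)
  have hs : s ^ 2 = t ^ 2 + 4 * a * b := sq_sqrt (by positivity)
  have hts : 0 < t + s := by
    have : |t| < s := by
      rw [← sqrt_sq_eq_abs]; exact sqrt_lt_sqrt (sq_nonneg t) (by nlinarith)
    linarith [neg_abs_le t]
  refine ⟨(t + s) / (2 * a), mem_Ioi.2 (by positivity), ?_⟩
  field_simp
  linear_combination hs

theorem hasDerivAt_mul_sub_div {u : ℝ} (hu : u ≠ 0) :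
    HasDerivAt (fun u : ℝ => a * u - b / u) (a + b / u ^ 2) u := by
  have h : HasDerivAt (fun u : ℝ => a * u - b * u⁻¹) (a * 1 - b * -(u ^ 2)⁻¹) u :=
    ((hasDerivAt_id' u).const_mul a).sub ((hasDerivAt_inv hu).const_mul b)
  simp only [div_eq_mul_inv]
  convert h using 1
  ring

theorem integral_comp_mul_sub_div_Ioi (ha : 0 < a) (hb : 0 < b) (F : ℝ → E) :
    ∫ u in Ioi 0, (a + b / u ^ 2) • F (a * u - b / u) = ∫ t, F t := by
  have := integral_image_eq_integral_abs_deriv_smul measurableSet_Ioi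
    (fun u hu => (hasDerivAt_mul_sub_div (a := a) (b := b) (ne_of_gt hu)).hasDerivWithinAt)
    (strictMonoOn_mul_sub_div ha.le hb).injOn F
  rw [image_mul_sub_div_Ioi ha hb, setIntegral_univ] at this
  rw [this]
  refine setIntegral_congr_fun measurableSet_Ioi fun u _ => ?_
  rw [abs_of_pos (by positivity)]

theorem integrableOn_comp_mul_sub_div_Ioi_iff (ha : 0 < a) (hb : 0 < b) (F : ℝ → E) :
    IntegrableOn (fun u => (a + b / u ^ 2) • F (a * u - b / u)) (Ioi 0) ↔ Integrable F := by
  have := integrableOn_image_iff_integrableOn_abs_deriv_smul measurableSet_Ioi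
    (fun u hu => (hasDerivAt_mul_sub_div (a := a) (b := b) (ne_of_gt hu)).hasDerivWithinAt)
    (strictMonoOn_mul_sub_div ha.le hb).injOn F
  rw [image_mul_sub_div_Ioi ha hb, integrableOn_univ] at this
  rw [this]
  refine integrableOn_congr_fun (fun u _ => ?_) measurableSet_Ioi
  rw [abs_of_pos (by positivity)]

theorem integral_comp_div_Ioi {k : ℝ} (hk : 0 < k) (G : ℝ → E) :
    ∫ u in Ioi 0, (k / u ^ 2) • G (k / u) = ∫ u in Ioi 0, G u := by
  have hderiv : ∀ u ∈ Ioi (0 : ℝ), HasDerivWithinAt (fun u => k / u) (-(k / u ^ 2)) (Ioi 0) u :=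
    fun u hu => by
      simpa [div_eq_mul_inv] using ((hasDerivAt_inv (ne_of_gt hu)).const_mul k).hasDerivWithinAt
  have hinj : InjOn (fun u : ℝ => k / u) (Ioi 0) := fun x _ y _ hxy =>
    inv_injective (mul_left_cancel₀ hk.ne' (by simpa [div_eq_mul_inv] using hxy))
  have himage : (fun u : ℝ => k / u) '' Ioi 0 = Ioi 0 := by
    refine Subset.antisymm (image_subset_iff.2 fun u hu => div_pos hk hu) fun v hv => ?_
    exact ⟨k / v, div_pos hk hv, div_div_cancel₀ hk.ne'⟩
  have := integral_image_eq_integral_abs_deriv_smul measurableSet_Ioi hderiv hinj G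
  rw [himage] at this
  rw [this]
  refine setIntegral_congr_fun measurableSet_Ioi fun u hu => ?_
  rw [abs_neg, abs_of_pos (div_pos hk (pow_pos hu 2))]

theorem integral_comp_mul_sub_div_Ioi_of_even (ha : 0 < a) (hb : 0 < b) {F : ℝ → E}
    (hF : Integrable F) (heven : ∀ t, F (-t) = F t) :
    ∫ u in Ioi 0, F (a * u - b / u) = (2 * a)⁻¹ • ∫ t, F t := by
  set I := ∫ u in Ioi 0, F (a * u - b / u)
  have hswap : ∫ u in Ioi 0, (b / u ^ 2) • F (a * u - b / u) = a • I := by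
    rw [← integral_comp_div_Ioi (div_pos hb ha), ← integral_smul]
    refine setIntegral_congr_fun measurableSet_Ioi fun u hu => ?_
    have hu : u ≠ 0 := ne_of_gt hu
    have : a * (b / a / u) - b / (b / a / u) = -(a * u - b / u) := by
      field_simp; ring
    rw [this, heven, smul_smul]
    congr 1
    field_simp
  have hweighted := (integrableOn_comp_mul_sub_div_Ioi_iff ha hb F).2 hF
  have hI : IntegrableOn (fun u => F (a * u - b / u)) (Ioi 0) := by
    have hbound : ∀ u : ℝ, ‖(a + b / u ^ 2)⁻¹‖ ≤ a⁻¹ := fun u => by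
      have : 0 ≤ b / u ^ 2 := by positivity
      rw [norm_inv, Real.norm_of_nonneg (by linarith)]
      exact inv_anti₀ ha (by linarith)
    have hmeas : Measurable fun u : ℝ => (a + b / u ^ 2)⁻¹ := by fun_prop
    refine IntegrableOn.congr_fun (hweighted.bdd_smul a⁻¹ hmeas.aestronglyMeasurable
      (ae_of_all _ hbound)) (fun u _ => ?_) measurableSet_Ioi
    have : 0 ≤ b / u ^ 2 := by positivity
    simp only [Pi.smul_apply', smul_smul, inv_mul_cancel₀ (by linarith : a + b / u ^ 2 ≠ 0),
      one_smul]
  have hJ : IntegrableOn (fun u => (b / u ^ 2) • F (a * u - b / u)) (Ioi 0) :=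
    (hweighted.sub (hI.smul a)).congr_fun (fun u _ => by simp [add_smul]) measurableSet_Ioi
  have htotal : ∫ t, F t = (2 * a) • I := by
    rw [← integral_comp_mul_sub_div_Ioi ha hb F]
    simp only [add_smul]
    rw [integral_add (f := fun u => a • F (a * u - b / u)) (hI.smul a) hJ, integral_smul, hswap,
      two_mul, add_smul]
  rw [htotal, smul_smul, inv_mul_cancel₀ (by positivity), one_smul]

end CauchySchlomilch

theorem integral_Ioi_rpow_neg_half_smul {E : Type*} [NormedAddCommGroup E] [NormedSpace ℝ E]
    (g : ℝ → E) :
    ∫ w in Ioi 0, w ^ (-(1 : ℝ) / 2) • g w = (2 : ℝ) • ∫ u in Ioi 0, g (u ^ 2) := by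
  rw [← integral_comp_rpow_Ioi_of_pos two_pos, ← integral_smul]
  refine setIntegral_congr_fun measurableSet_Ioi fun u hu => ?_
  have hu : 0 < u := hu
  have hsqrt : (u ^ 2) ^ (-(1 : ℝ) / 2) = u⁻¹ := by
    rw [neg_div, rpow_neg (sq_nonneg u), ← sqrt_eq_rpow, sqrt_sq hu.le]
  rw [show (2 : ℝ) - 1 = 1 by norm_num, rpow_one, rpow_two, hsqrt, smul_smul,
    mul_assoc, mul_inv_cancel₀ hu.ne', mul_one]

theorem exp_neg_mul_sq_mul_exp_neg_div_sq {c d : ℝ} (hc : 0 ≤ c) (hd : 0 ≤ d) {u : ℝ}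
    (hu : u ≠ 0) :
    exp (-c * u ^ 2) * exp (-d / u ^ 2) = exp (-2 * √(c * d)) * exp (-(√c * u - √d / u) ^ 2) := by
  rw [← exp_add, ← exp_add, sqrt_mul hc]
  congr 1
  field_simp
  linear_combination u ^ 4 * sq_sqrt hc + sq_sqrt hd

theorem bessel_gr_formula (c d : ℝ) (hc : 0 < c) (hd : 0 < d) :
    ∫ w in Set.Ioi (0:ℝ), w ^ (-(1:ℝ)/2) * Real.exp (-c*w) * Real.exp (-d/w)
      = Real.sqrt (π / c) * Real.exp (-2 * Real.sqrt (c*d)) := by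
  have hgauss : ∫ t, exp (-t ^ 2) = √π := by simpa using integral_gaussian 1
  have hint : Integrable fun t : ℝ => exp (-t ^ 2) := by
    simpa using integrable_exp_neg_mul_sq one_pos
  have hsquare : ∫ u in Ioi 0, exp (-c * u ^ 2) * exp (-d / u ^ 2)
      = ∫ u in Ioi 0, exp (-2 * √(c * d)) * exp (-(√c * u - √d / u) ^ 2) :=
    setIntegral_congr_fun measurableSet_Ioi fun u hu =>
      exp_neg_mul_sq_mul_exp_neg_div_sq hc.le hd.le (ne_of_gt hu)
  have hsubst := integral_Ioi_rpow_neg_half_smul fun w => exp (-c * w) * exp (-d / w)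
  simp only [smul_eq_mul, ← mul_assoc] at hsubst
  rw [hsubst, hsquare, integral_const_mul,
    integral_comp_mul_sub_div_Ioi_of_even (sqrt_pos.2 hc) (sqrt_pos.2 hd) hint
      (fun t => by rw [neg_sq]), hgauss, sqrt_div' π hc.le, smul_eq_mul]
  field_simp
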